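/- For every integer n ≥ 2 and all complex numbers b₁, …, bₙ, writing B = b₁ + ⋯ + bₙ, the following identity holds: ∏_{j=0}^{n−3} (B − 2 − j) + Σ_{s=2}^{n−1} (−1)^{s−1} (B − 1)^{s−2} Σ_{{J₁,…,J_s}} ∏_{j=1}^{s} f(b_{J_j} − 1, |J_j| + 1) = (n − 2)! · ∏_{i=1}^{n−2} (b_i − 1), where the inner sum runs over all partitions {J₁, …, J_s} of {1, …, n} into s nonempty pairwise disjoint blocks such that the elements n − 1 and n lie in the same block. -/

import Mathlib

open Finset

open scoped Classical

/-- The set of partitions of `{1, …, n}` (modeled as `Fin n`) into `s`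
nonempty pairwise disjoint blocks, as a `Finset` of collections of blocks. -/
noncomputable def partitionsInto (n s : ℕ) : Finset (Finset (Finset (Fin n))) :=
  Finset.univ.filter fun P => P.card = s ∧ (∀ J ∈ P, J.Nonempty) ∧
    (↑P : Set (Finset (Fin n))).PairwiseDisjoint id ∧ P.sup id = Finset.univ

section AuxiliaryLemmas

set_option linter.unusedSectionVars false

variable {α : Type*} [DecidableEq α]


/-- Alternating sum of powers of subset sums vanishes for low exponents. -/
lemma alt_sum_pow_zero (v : α → ℂ) :
    ∀ (S : Finset α) (j : ℕ), j < S.card →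
      ∑ T ∈ S.powerset, (-1 : ℂ) ^ T.card * (∑ i ∈ T, v i) ^ j = 0 := by
  intro S
  induction S using Finset.induction_on with
  | empty => intro j hj; simp at hj
  | @insert a S ha IH =>
    intro j hj
    rw [Finset.card_insert_of_notMem ha] at hj
    have hjS : j ≤ S.card := Nat.lt_succ_iff.1 hj
    rw [Finset.sum_powerset_insert ha]
    have step : ∀ T ∈ S.powerset,
        (-1:ℂ) ^ (insert a T).card * (∑ i ∈ insert a T, v i) ^ j
          = -((-1:ℂ)^T.card * (∑ i ∈ T, v i + v a) ^ j) := by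
      intro T hT
      have haT : a ∉ T := fun h => ha (Finset.mem_powerset.1 hT h)
      rw [Finset.card_insert_of_notMem haT, Finset.sum_insert haT, pow_succ]
      ring
    rw [Finset.sum_congr rfl step, Finset.sum_neg_distrib]
    have expand : ∑ T ∈ S.powerset, (-1:ℂ)^T.card * (∑ i ∈ T, v i + v a) ^ j
        = ∑ k ∈ Finset.range (j+1),
            (∑ T ∈ S.powerset, (-1:ℂ)^T.card * (∑ i ∈ T, v i)^k) * (v a ^ (j-k) * (j.choose k)) := by
      have e1 : ∀ T ∈ S.powerset, (-1:ℂ)^T.card * (∑ i ∈ T, v i + v a) ^ j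
          = ∑ k ∈ Finset.range (j+1),
              ((-1:ℂ)^T.card * (∑ i ∈ T, v i)^k) * (v a ^ (j-k) * (j.choose k)) := by
        intro T _
        rw [add_pow, Finset.mul_sum]
        apply Finset.sum_congr rfl
        intro k _
        ring
      rw [Finset.sum_congr rfl e1, Finset.sum_comm]
      exact Finset.sum_congr rfl fun k _ => (Finset.sum_mul _ _ _).symm
    rw [expand, Finset.sum_range_succ]
    have low : ∀ k ∈ Finset.range j,
        (∑ T ∈ S.powerset, (-1:ℂ)^T.card * (∑ i ∈ T, v i)^k) * (v a ^ (j-k) * (j.choose k)) = 0 := by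
      intro k hk
      rw [IH k (lt_of_lt_of_le (Finset.mem_range.1 hk) hjS), zero_mul]
    rw [Finset.sum_congr rfl low]
    simp

/-- Signed version. -/
lemma alt_sum_pow_zero' (v : α → ℂ) (S : Finset α) (j : ℕ) (hj : j < S.card) :
    ∑ T ∈ S.powerset, (-1 : ℂ) ^ (S.card - T.card) * (∑ i ∈ T, v i) ^ j = 0 := by
  have : ∀ T ∈ S.powerset, (-1 : ℂ) ^ (S.card - T.card) * (∑ i ∈ T, v i) ^ j
      = (-1:ℂ)^S.card * ((-1:ℂ)^T.card * (∑ i ∈ T, v i) ^ j) := by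
    intro T hT
    have h1 : S.card - T.card + (T.card + T.card) = S.card + T.card := by
      have := Finset.card_le_card (Finset.mem_powerset.1 hT)
      omega
    have h1' : S.card - T.card + T.card = S.card := by
      have := Finset.card_le_card (Finset.mem_powerset.1 hT)
      omega
    have h3 : (-1:ℂ)^(S.card - T.card) * (-1:ℂ)^T.card = (-1:ℂ)^S.card := by
      rw [← pow_add, h1']
    have hsq : (-1:ℂ)^T.card * (-1:ℂ)^T.card = 1 := by
      rw [← pow_add]; exact (neg_one_pow_eq_one_iff_even (by norm_num)).2 (Even.add_self _)
    have h2 : (-1:ℂ) ^ (S.card - T.card) = (-1:ℂ)^S.card * (-1:ℂ)^T.card := by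
      calc (-1:ℂ) ^ (S.card - T.card) = ((-1:ℂ) ^ (S.card - T.card) * (-1:ℂ)^T.card) * (-1:ℂ)^T.card := by
            rw [mul_assoc, hsq, mul_one]
        _ = (-1:ℂ)^S.card * (-1:ℂ)^T.card := by rw [h3]
    rw [h2]; ring
  rw [Finset.sum_congr rfl this, ← Finset.mul_sum, alt_sum_pow_zero v S j hj, mul_zero]

/-- Top alternating sum gives factorial times product. -/
lemma alt_sum_pow_card (v : α → ℂ) :
    ∀ (S : Finset α),
      ∑ T ∈ S.powerset, (-1 : ℂ) ^ (S.card - T.card) * (∑ i ∈ T, v i) ^ S.card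
        = (S.card).factorial * ∏ i ∈ S, v i := by
  intro S
  induction S using Finset.induction_on with
  | empty => simp
  | @insert a S ha IH =>
    rw [Finset.sum_powerset_insert ha, Finset.card_insert_of_notMem ha]
    have step1 : ∀ T ∈ S.powerset,
        (-1:ℂ) ^ (S.card + 1 - T.card) * (∑ i ∈ T, v i) ^ (S.card+1)
          = -((-1:ℂ)^(S.card - T.card) * (∑ i ∈ T, v i) ^ (S.card+1)) := by
      intro T hT
      have h := Finset.card_le_card (Finset.mem_powerset.1 hT)
      have : S.card + 1 - T.card = (S.card - T.card) + 1 := by omega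
      rw [this, pow_succ]
      ring
    have step2 : ∀ T ∈ S.powerset,
        (-1:ℂ) ^ (S.card + 1 - (insert a T).card) * (∑ i ∈ insert a T, v i) ^ (S.card+1)
          = (-1:ℂ)^(S.card - T.card) * (∑ i ∈ T, v i + v a) ^ (S.card+1) := by
      intro T hT
      have haT : a ∉ T := fun h => ha (Finset.mem_powerset.1 hT h)
      rw [Finset.card_insert_of_notMem haT, Finset.sum_insert haT]
      have h := Finset.card_le_card (Finset.mem_powerset.1 hT)
      have : S.card + 1 - (T.card + 1) = S.card - T.card := by omega
      rw [this]
      ring_nf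
    rw [Finset.sum_congr rfl step1, Finset.sum_congr rfl step2]
    have expand : ∑ T ∈ S.powerset, (-1:ℂ)^(S.card - T.card) * (∑ i ∈ T, v i + v a) ^ (S.card+1)
        = ∑ k ∈ Finset.range (S.card+2),
            (∑ T ∈ S.powerset, (-1:ℂ)^(S.card-T.card) * (∑ i ∈ T, v i)^k) * (v a ^ (S.card+1-k) * ((S.card+1).choose k)) := by
      have e1 : ∀ T ∈ S.powerset, (-1:ℂ)^(S.card-T.card) * (∑ i ∈ T, v i + v a) ^ (S.card+1)
          = ∑ k ∈ Finset.range (S.card+2),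
              ((-1:ℂ)^(S.card-T.card) * (∑ i ∈ T, v i)^k) * (v a ^ (S.card+1-k) * ((S.card+1).choose k)) := by
        intro T _
        rw [add_pow, Finset.mul_sum]
        exact Finset.sum_congr rfl fun k _ => by ring
      rw [Finset.sum_congr rfl e1, Finset.sum_comm]
      exact Finset.sum_congr rfl fun k _ => (Finset.sum_mul _ _ _).symm
    rw [expand]
    rw [show S.card + 2 = (S.card + 1) + 1 from rfl, Finset.sum_range_succ, Finset.sum_range_succ]
    have low : ∀ k ∈ Finset.range S.card,
        (∑ T ∈ S.powerset, (-1:ℂ)^(S.card-T.card) * (∑ i ∈ T, v i)^k) * (v a ^ (S.card+1-k) * ((S.card+1).choose k)) = 0 := by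
      intro k hk
      rw [alt_sum_pow_zero' v S k (Finset.mem_range.1 hk), zero_mul]
    rw [Finset.sum_congr rfl low]
    rw [IH]
    simp [Finset.prod_insert ha, Nat.factorial_succ, Nat.choose_succ_self_right]
    push_cast
    ring


/-- difference of falling products -/
lemma prod_fall_diff (y : ℂ) (k : ℕ) :
    (∏ r ∈ Finset.range k, (y - r)) - ∏ r ∈ Finset.range k, (y - 1 - r)
      = k * ∏ r ∈ Finset.range (k - 1), (y - 1 - r) := by
  cases k with
  | zero => simp
  | succ m =>
    have h1 : ∏ r ∈ Finset.range (m+1), (y - r) = y * ∏ r ∈ Finset.range m, (y - 1 - r) := by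
      rw [Finset.prod_range_succ']
      have : ∀ r ∈ Finset.range m, (y - ((r:ℕ)+1 : ℕ)) = y - 1 - r := by
        intro r _; push_cast; ring
      rw [Finset.prod_congr rfl this]
      push_cast; ring
    have h2 : ∏ r ∈ Finset.range (m+1), (y - 1 - r)
        = (∏ r ∈ Finset.range m, (y - 1 - r)) * (y - 1 - m) := Finset.prod_range_succ _ _
    rw [h1, h2]
    have : (m+1 : ℕ) - 1 = m := rfl
    rw [this]
    push_cast; ring

/-- splitting a falling product -/
lemma prod_fall_split (w : ℂ) (p q : ℕ) :
    ∏ r ∈ Finset.range (p + q), (w - r)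
      = (∏ r ∈ Finset.range p, (w - r)) * ∏ r ∈ Finset.range q, (w - p - r) := by
  rw [Finset.prod_range_add]
  congr 1
  apply Finset.prod_congr rfl
  intro r _; push_cast; ring

/-- reflecting a falling product -/
lemma prod_fall_reflect (w : ℂ) (k : ℕ) :
    ∏ r ∈ Finset.range k, (w - r) = ∏ r ∈ Finset.range k, (w - (k-1:ℕ) + r) := by
  rw [← Finset.prod_range_reflect]
  apply Finset.prod_congr rfl
  intro r hr
  have hr' : r ≤ k - 1 := by have := Finset.mem_range.1 hr; omega
  rw [Nat.cast_sub hr']; ring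

lemma sum_powerset_filter_mem (S : Finset α) (a : α) (ha : a ∈ S) (f : Finset α → ℂ) :
    ∑ T ∈ S.powerset.filter (fun T => a ∈ T), f T
      = ∑ T ∈ (S.erase a).powerset, f (insert a T) := by
  apply Finset.sum_nbij' (i := fun T => T.erase a) (j := fun T => insert a T)
  · intro T hT
    rw [Finset.mem_filter, Finset.mem_powerset] at hT
    exact Finset.mem_powerset.2 (Finset.erase_subset_erase a hT.1)
  · intro T hT
    rw [Finset.mem_powerset] at hT
    rw [Finset.mem_filter, Finset.mem_powerset]
    refine ⟨Finset.insert_subset ha (hT.trans (Finset.erase_subset _ _)), Finset.mem_insert_self _ _⟩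
  · intro T hT
    rw [Finset.mem_filter] at hT
    exact Finset.insert_erase hT.2
  · intro T hT
    rw [Finset.mem_powerset] at hT
    exact Finset.erase_insert (fun h => (Finset.mem_erase.1 (hT h)).1 rfl)
  · intro T hT
    rw [Finset.mem_filter] at hT
    rw [Finset.insert_erase hT.2]

lemma sum_powerset_pair_swap (S : Finset α) (F : α → Finset α → ℂ) :
    ∑ T ∈ S.powerset, ∑ t ∈ T, F t T
      = ∑ t ∈ S, ∑ T ∈ (S.erase t).powerset, F t (insert t T) := by
  have h1 : ∀ T ∈ S.powerset, ∑ t ∈ T, F t T = ∑ t ∈ S, if t ∈ T then F t T else 0 := by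
    intro T hT
    rw [Finset.sum_ite_mem]
    rw [Finset.mem_powerset] at hT
    rw [Finset.inter_eq_right.2 hT]
  rw [Finset.sum_congr rfl h1, Finset.sum_comm]
  apply Finset.sum_congr rfl
  intro t _
  rw [← Finset.sum_filter, sum_powerset_filter_mem S t ‹t ∈ S›]

lemma sum_powerset_compl (S : Finset α) (f : Finset α → ℂ) :
    ∑ T ∈ S.powerset, f (S \ T) = ∑ T ∈ S.powerset, f T := by
  apply Finset.sum_nbij' (i := fun T => S \ T) (j := fun T => S \ T)
  · intro T hT; exact Finset.mem_powerset.2 (Finset.sdiff_subset)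
  · intro T hT; exact Finset.mem_powerset.2 (Finset.sdiff_subset)
  · intro T hT; exact Finset.sdiff_sdiff_eq_self (Finset.mem_powerset.1 hT)
  · intro T hT; exact Finset.sdiff_sdiff_eq_self (Finset.mem_powerset.1 hT)
  · intro T hT; rfl


noncomputable def Bfun (b : α → ℂ) (S : Finset α) (x : ℂ) : ℂ :=
  if S = ∅ then 1 else x * ∏ r ∈ Finset.range (S.card - 1), (x + (∑ i ∈ S, b i) - 1 - r)

noncomputable def Afun (b : α → ℂ) (T : Finset α) (z : ℂ) : ℂ :=
  ∏ r ∈ Finset.range T.card, (z + (∑ i ∈ T, b i) - 1 - r)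

noncomputable def Lfun (b : α → ℂ) (S : Finset α) (x z : ℂ) : ℂ :=
  ∑ T ∈ S.powerset, Afun b T z * Bfun b (S \ T) x

noncomputable def Rfun (b : α → ℂ) (S : Finset α) (x z : ℂ) : ℂ :=
  ∏ r ∈ Finset.range S.card, (x + z + (∑ i ∈ S, b i) - 1 - r)

lemma sdiff_insert_comm (S T : Finset α) (t : α) :
    S \ insert t T = (S.erase t) \ T := by
  ext x; simp only [Finset.mem_sdiff, Finset.mem_insert, Finset.mem_erase]; tauto

lemma Afun_diff (b : α → ℂ) (T : Finset α) (z : ℂ) :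
    Afun b T (z+1) - Afun b T z
      = T.card * ∏ r ∈ Finset.range (T.card - 1), (z + (∑ i ∈ T, b i) - 1 - r) := by
  unfold Afun
  have e1 : ∏ r ∈ Finset.range T.card, (z + 1 + (∑ i ∈ T, b i) - 1 - r)
      = ∏ r ∈ Finset.range T.card, ((z + (∑ i ∈ T, b i)) - r) := by
    apply Finset.prod_congr rfl; intro r _; ring
  have e2 : ∏ r ∈ Finset.range T.card, (z + (∑ i ∈ T, b i) - 1 - r)
      = ∏ r ∈ Finset.range T.card, ((z + (∑ i ∈ T, b i)) - 1 - r) := by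
    apply Finset.prod_congr rfl; intro r _; ring
  rw [e1, e2, prod_fall_diff]

lemma prod_neg_shift (g : ℕ → ℂ) (k : ℕ) :
    ∏ r ∈ Finset.range k, (-(g r)) = (-1:ℂ)^k * ∏ r ∈ Finset.range k, g r := by
  have : ∀ r ∈ Finset.range k, -(g r) = (-1:ℂ) * g r := by intro r _; ring
  rw [Finset.prod_congr rfl this, Finset.prod_mul_distrib, Finset.prod_const, Finset.card_range]

lemma prod_fall_factor (x : ℂ) (k : ℕ) (hk : 1 ≤ k) :
    ∏ r ∈ Finset.range k, (x - r) = x * ∏ r ∈ Finset.range (k-1), (x - 1 - r) := by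
  obtain ⟨m, rfl⟩ : ∃ m, k = m + 1 := ⟨k-1, by omega⟩
  rw [Finset.prod_range_succ']
  have : ∀ r ∈ Finset.range m, (x - ((r:ℕ)+1 : ℕ)) = x - 1 - r := by
    intro r _; push_cast; ring
  rw [Finset.prod_congr rfl this, Nat.add_sub_cancel]
  push_cast; ring

lemma Rb (b : α → ℂ) (x : ℂ) :
    ∀ S : Finset α, ∀ z : ℂ, Lfun b S x z = Rfun b S x z := by
  intro S
  induction S using Finset.strongInduction with
  | _ S IH =>
    intro z
    by_cases hS : S = ∅
    · subst hS
      simp [Lfun, Rfun, Afun, Bfun]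
    have hk : 1 ≤ S.card := Finset.card_pos.2 (Finset.nonempty_of_ne_empty hS)
    -- periodicity of the difference
    have hper : ∀ w : ℂ, Lfun b S x (w+1) - Lfun b S x w = Rfun b S x (w+1) - Rfun b S x w := by
      intro w
      have hR : Rfun b S x (w+1) - Rfun b S x w
          = S.card * ∏ r ∈ Finset.range (S.card - 1), (x + w + (∑ i ∈ S, b i) - 1 - r) := by
        have e1 : Rfun b S x (w+1) = ∏ r ∈ Finset.range S.card, ((x + w + (∑ i ∈ S, b i)) - r) := by
          unfold Rfun; apply Finset.prod_congr rfl; intro r _; ring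
        have e2 : Rfun b S x w = ∏ r ∈ Finset.range S.card, ((x + w + (∑ i ∈ S, b i)) - 1 - r) := by
          unfold Rfun; apply Finset.prod_congr rfl; intro r _; ring
        rw [e1, e2, prod_fall_diff]
      have hL : Lfun b S x (w+1) - Lfun b S x w
          = S.card * ∏ r ∈ Finset.range (S.card - 1), (x + w + (∑ i ∈ S, b i) - 1 - r) := by
        unfold Lfun
        rw [← Finset.sum_sub_distrib]
        have e1 : ∀ T ∈ S.powerset,
            Afun b T (w+1) * Bfun b (S \ T) x - Afun b T w * Bfun b (S \ T) x
              = ∑ t ∈ T, (∏ r ∈ Finset.range (T.card - 1), (w + (∑ i ∈ T, b i) - 1 - r)) * Bfun b (S \ T) x := by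
          intro T _
          rw [Finset.sum_const, ← sub_mul, Afun_diff]
          rw [nsmul_eq_mul]
          ring
        rw [Finset.sum_congr rfl e1]
        rw [sum_powerset_pair_swap S (fun t T =>
          (∏ r ∈ Finset.range (T.card - 1), (w + (∑ i ∈ T, b i) - 1 - r)) * Bfun b (S \ T) x)]
        have e2 : ∀ t ∈ S,
            ∑ T ∈ (S.erase t).powerset,
              (∏ r ∈ Finset.range ((insert t T).card - 1), (w + (∑ i ∈ insert t T, b i) - 1 - r))
                * Bfun b (S \ insert t T) x
            = ∏ r ∈ Finset.range (S.card - 1), (x + w + (∑ i ∈ S, b i) - 1 - r) := by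
          intro t ht
          have e3 : ∀ T ∈ (S.erase t).powerset,
              (∏ r ∈ Finset.range ((insert t T).card - 1), (w + (∑ i ∈ insert t T, b i) - 1 - r))
                * Bfun b (S \ insert t T) x
              = Afun b T (w + b t) * Bfun b ((S.erase t) \ T) x := by
            intro T hT
            have htT : t ∉ T := by
              intro h
              exact (Finset.mem_erase.1 ((Finset.mem_powerset.1 hT) h)).1 rfl
            rw [Finset.card_insert_of_notMem htT, Finset.sum_insert htT, sdiff_insert_comm]
            unfold Afun
            rw [Nat.add_sub_cancel]
            apply congrArg (· * Bfun b ((S.erase t) \ T) x)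
            apply Finset.prod_congr rfl; intro r _; ring
          rw [Finset.sum_congr rfl e3]
          have : ∑ T ∈ (S.erase t).powerset, Afun b T (w + b t) * Bfun b ((S.erase t) \ T) x
              = Lfun b (S.erase t) x (w + b t) := rfl
          rw [this, IH (S.erase t) (Finset.erase_ssubset ht)]
          unfold Rfun
          rw [Finset.card_erase_of_mem ht]
          apply Finset.prod_congr rfl
          intro r _
          have : ∑ i ∈ S.erase t, b i = (∑ i ∈ S, b i) - b t := by
            rw [← Finset.add_sum_erase S b ht]; ring
          rw [this]; ring
        rw [Finset.sum_congr rfl e2, Finset.sum_const, nsmul_eq_mul]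
      rw [hL, hR]
    -- root
    set z₀ : ℂ := (S.card : ℂ) - x - (∑ i ∈ S, b i) with hz₀
    have hRroot : Rfun b S x z₀ = 0 := by
      unfold Rfun
      apply Finset.prod_eq_zero (Finset.mem_range.2 (Nat.sub_lt hk Nat.one_pos) :
        S.card - 1 ∈ Finset.range S.card)
      rw [Nat.cast_sub hk, hz₀]
      push_cast
      ring
    have hLroot : Lfun b S x z₀ = 0 := by
      unfold Lfun
      have claim : ∀ T ∈ S.powerset,
          Afun b T z₀ * Bfun b (S \ T) x
            = (-1:ℂ)^(S.card - (S \ T).card) *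
                (x * ∏ r ∈ Finset.range (S.card - 1), (x + (∑ i ∈ S \ T, b i) - 1 - r)) := by
        intro T hT
        rw [Finset.mem_powerset] at hT
        have hbsum : (∑ i ∈ S \ T, b i) + ∑ i ∈ T, b i = ∑ i ∈ S, b i :=
          Finset.sum_sdiff hT
        have hcardle : T.card ≤ S.card := Finset.card_le_card hT
        have hcardU : (S \ T).card = S.card - T.card := Finset.card_sdiff_of_subset hT
        by_cases hT0 : T = ∅
        · subst hT0
          simp only [Finset.sdiff_empty, Finset.card_empty, Nat.sub_self, pow_zero, one_mul,
            Afun, Finset.card_empty, Finset.range_zero, Finset.prod_empty]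
          rw [Bfun, if_neg hS]
        by_cases hU0 : S \ T = ∅
        · have hTS : T = S :=
            Finset.Subset.antisymm hT (Finset.sdiff_eq_empty_iff_subset.1 hU0)
          subst hTS
          rw [Finset.sdiff_self] at *
          simp only [Finset.card_empty, Nat.sub_zero, Finset.sum_empty]
          rw [Bfun, if_pos rfl, mul_one]
          have e1 : ∀ r ∈ Finset.range T.card,
              z₀ + (∑ i ∈ T, b i) - 1 - (r:ℂ) = -((x - ((T.card - 1:ℕ):ℂ)) + r) := by
            intro r _
            rw [Nat.cast_sub (hk.trans_eq rfl), hz₀]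
            have h0 : (∑ i ∈ (∅: Finset α), b i) + ∑ i ∈ T, b i = ∑ i ∈ T, b i := hbsum
            push_cast
            simp only [Finset.sum_empty, zero_add] at h0
            ring
          unfold Afun
          rw [Finset.prod_congr rfl e1]
          have e2 : ∀ r ∈ Finset.range T.card,
              (-((x - ((T.card - 1:ℕ):ℂ)) + r)) = -(((x : ℂ)) - ((T.card-1:ℕ):ℂ) + r) := by
            intro r _; ring
          rw [Finset.prod_congr rfl e2, prod_neg_shift (fun r => x - ((T.card-1:ℕ):ℂ) + r),
            ← prod_fall_reflect x T.card, prod_fall_factor x T.card hk]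
          have : ∀ r ∈ Finset.range (T.card - 1), (x - 1 - (r:ℂ)) = x + 0 - 1 - r := by
            intro r _; ring
          rw [Finset.prod_congr rfl this]
        -- main case : both T and S \ T nonempty
        have htpos : 1 ≤ T.card := Finset.card_pos.2 (Finset.nonempty_of_ne_empty hT0)
        have hupos : 1 ≤ (S \ T).card := Finset.card_pos.2 (Finset.nonempty_of_ne_empty hU0)
        have huk : T.card + (S \ T).card = S.card := by omega
        set c : ℂ := ∑ i ∈ S \ T, b i with hc
        set w : ℂ := x + c - ((S \ T).card : ℂ) with hw
        have hkcast : ((S.card:ℂ)) = (T.card:ℂ) + (((S \ T).card:ℂ)) := by exact_mod_cast huk.symm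
        have stepA : Afun b T z₀ = (-1:ℂ)^T.card * ∏ r ∈ Finset.range T.card, (w - r) := by
          have e1 : ∀ r ∈ Finset.range T.card,
              z₀ + (∑ i ∈ T, b i) - 1 - (r:ℂ) = -(w - ((T.card - 1:ℕ):ℂ) + r) := by
            intro r _
            rw [Nat.cast_sub htpos, hz₀, hw]
            linear_combination hbsum + hkcast
          unfold Afun
          rw [Finset.prod_congr rfl e1, prod_neg_shift (fun r => w - ((T.card-1:ℕ):ℂ) + r),
            ← prod_fall_reflect w T.card]
        have stepB : ∏ r ∈ Finset.range (S.card - 1), (x + c - 1 - (r:ℂ))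
            = (∏ r ∈ Finset.range ((S \ T).card - 1), (x + c - 1 - (r:ℂ)))
                * ∏ r ∈ Finset.range T.card, (w - r) := by
          have e4 : S.card - 1 = ((S \ T).card - 1) + T.card := by omega
          have e5 : ∀ r ∈ Finset.range (S.card - 1), (x + c - 1 - (r:ℂ)) = (x + c - 1) - r := by
            intro r _; ring
          have hcast : (((S \ T).card - 1 : ℕ):ℂ) = (((S \ T).card:ℕ):ℂ) - 1 := by
            push_cast [Nat.cast_sub hupos]; ring
          have e6 : ∀ r ∈ Finset.range T.card,
              (x + c - 1) - (((S \ T).card - 1 : ℕ):ℂ) - (r:ℂ) = w - r := by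
            intro r _
            rw [hcast, hw]
            ring
          rw [Finset.prod_congr rfl e5, e4, prod_fall_split (x + c - 1) ((S \ T).card - 1) T.card,
            Finset.prod_congr rfl e6]
        have hsign : S.card - (S \ T).card = T.card := by omega
        rw [hsign, stepA, stepB, Bfun, if_neg hU0, ← hc]
        ring
      rw [Finset.sum_congr rfl claim]
      rw [sum_powerset_compl S (fun V => (-1:ℂ)^(S.card - V.card) *
            (x * ∏ r ∈ Finset.range (S.card - 1), (x + (∑ i ∈ V, b i) - 1 - r)))]
      have expand : ∀ V ∈ S.powerset,
          (-1:ℂ)^(S.card - V.card) *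
              (x * ∏ r ∈ Finset.range (S.card - 1), (x + (∑ i ∈ V, b i) - 1 - r))
            = ∑ W ∈ (Finset.range (S.card - 1)).powerset,
                (x * ∏ r ∈ (Finset.range (S.card -1)) \ W, (x - 1 - r)) *
                  ((-1:ℂ)^(S.card - V.card) * (∑ i ∈ V, b i)^W.card) := by
        intro V _
        have : ∏ r ∈ Finset.range (S.card - 1), (x + (∑ i ∈ V, b i) - 1 - r)
            = ∏ r ∈ Finset.range (S.card - 1), ((∑ i ∈ V, b i) + (x - 1 - r)) := by
          apply Finset.prod_congr rfl; intro r _; ring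
        rw [this, Finset.prod_add, Finset.mul_sum, Finset.mul_sum]
        apply Finset.sum_congr rfl
        intro W _
        rw [Finset.prod_const]
        ring
      rw [Finset.sum_congr rfl expand, Finset.sum_comm]
      apply Finset.sum_eq_zero
      intro W hW
      have hWcard : W.card < S.card := by
        have := Finset.card_le_card (Finset.mem_powerset.1 hW)
        rw [Finset.card_range] at this
        omega
      rw [← Finset.mul_sum, alt_sum_pow_zero' b S W.card hWcard, mul_zero]
    -- conclude via polynomial identity
    set Q : Polynomial ℂ :=
      (∑ T ∈ S.powerset, (∏ r ∈ Finset.range T.card,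
          (Polynomial.X + Polynomial.C ((∑ i ∈ T, b i) - 1 - (r:ℂ)))) * Polynomial.C (Bfun b (S \ T) x))
        - ∏ r ∈ Finset.range S.card,
            (Polynomial.X + Polynomial.C (x + (∑ i ∈ S, b i) - 1 - (r:ℂ))) with hQ
    have hQeval : ∀ v : ℂ, Q.eval v = Lfun b S x v - Rfun b S x v := by
      intro v
      rw [hQ, Polynomial.eval_sub, Polynomial.eval_finset_sum, Polynomial.eval_prod]
      congr 1
      · unfold Lfun
        apply Finset.sum_congr rfl
        intro T _
        rw [Polynomial.eval_mul, Polynomial.eval_C, Polynomial.eval_prod]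
        congr 1
        unfold Afun
        apply Finset.prod_congr rfl
        intro r _
        rw [Polynomial.eval_add, Polynomial.eval_X, Polynomial.eval_C]
        ring
      · unfold Rfun
        apply Finset.prod_congr rfl
        intro r _
        rw [Polynomial.eval_add, Polynomial.eval_X, Polynomial.eval_C]
        ring
    have hroots : ∀ m : ℕ, Q.eval (z₀ + m) = 0 := by
      intro m
      induction m with
      | zero => rw [Nat.cast_zero, add_zero, hQeval, hLroot, hRroot, sub_zero]
      | succ p ih =>
        have e : z₀ + ((p + 1 : ℕ) : ℂ) = (z₀ + p) + 1 := by push_cast; ring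
        rw [e, hQeval]
        have h2 := hper (z₀ + p)
        rw [hQeval] at ih
        linear_combination h2 + ih
    have hQ0 : Q = 0 := by
      apply Polynomial.eq_zero_of_infinite_isRoot
      apply Set.infinite_of_injective_forall_mem
        (f := fun m : ℕ => z₀ + (m:ℂ))
      · intro a b hab
        simp only [add_right_inj] at hab
        exact_mod_cast hab
      · intro m
        exact hroots m
    have := hQeval z
    rw [hQ0, Polynomial.eval_zero] at this
    linear_combination -this


noncomputable def parts (S : Finset α) : Finset (Finset (Finset α)) :=
  S.powerset.powerset.filter fun P => (∀ J ∈ P, J.Nonempty) ∧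
    (↑P : Set (Finset α)).PairwiseDisjoint id ∧ P.sup id = S

lemma mem_parts {S : Finset α} {P : Finset (Finset α)} :
    P ∈ parts S ↔ (∀ J ∈ P, J.Nonempty) ∧
      (↑P : Set (Finset α)).PairwiseDisjoint id ∧ P.sup id = S := by
  simp only [parts, Finset.mem_filter, Finset.mem_powerset, and_iff_right_iff_imp]
  rintro ⟨-, -, h3⟩
  intro J hJ
  rw [Finset.mem_powerset, ← h3]
  exact Finset.le_sup (f := id) hJ

lemma block_sub {S : Finset α} {P : Finset (Finset α)} {J : Finset α}
    (hP : P ∈ parts S) (hJ : J ∈ P) : J ⊆ S := by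
  rw [← (mem_parts.1 hP).2.2]
  exact Finset.le_sup (f := id) hJ

lemma parts_empty : parts (∅ : Finset α) = {∅} := by
  ext P
  simp only [Finset.mem_singleton, mem_parts]
  constructor
  · rintro ⟨h1, h2, h3⟩
    rcases Finset.eq_empty_or_nonempty P with h | h
    · exact h
    · obtain ⟨J, hJ⟩ := h
      obtain ⟨y, hy⟩ := h1 J hJ
      have : J ⊆ ∅ := by rw [← h3]; exact Finset.le_sup (f := id) hJ
      exact absurd (this hy) (Finset.notMem_empty y)
  · rintro rfl
    exact ⟨fun J hJ => absurd hJ (Finset.notMem_empty J), by simp, rfl⟩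

lemma block_unique {S : Finset α} {P : Finset (Finset α)} (hP : P ∈ parts S)
    {J K : Finset α} (hJ : J ∈ P) (hK : K ∈ P) {t : α} (htJ : t ∈ J) (htK : t ∈ K) :
    J = K := by
  by_contra hne
  have hd := (mem_parts.1 hP).2.1 (Finset.mem_coe.2 hJ) (Finset.mem_coe.2 hK) hne
  exact Finset.disjoint_left.1 hd htJ htK

noncomputable def blockOf (P : Finset (Finset α)) (t : α) : Finset α :=
  (P.filter fun K => t ∈ K).sup id

lemma blockOf_spec {S : Finset α} {P : Finset (Finset α)} (hP : P ∈ parts S)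
    {t : α} (ht : t ∈ S) :
    blockOf P t ∈ P ∧ t ∈ blockOf P t ∧ ∀ K ∈ P, t ∈ K → K = blockOf P t := by
  obtain ⟨-, -, h3⟩ := mem_parts.1 hP
  have : t ∈ P.sup id := by rw [h3]; exact ht
  obtain ⟨J, hJ, htJ⟩ := Finset.mem_sup.1 this
  have hfil : P.filter (fun K => t ∈ K) = {J} := by
    ext K
    simp only [Finset.mem_filter, Finset.mem_singleton]
    constructor
    · rintro ⟨hKP, htK⟩
      exact block_unique hP hKP hJ htK htJ
    · rintro rfl
      exact ⟨hJ, htJ⟩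
  have hblock : blockOf P t = J := by rw [blockOf, hfil, Finset.sup_singleton]; rfl
  rw [hblock]
  exact ⟨hJ, htJ, fun K hK htK => block_unique hP hK hJ htK htJ⟩

lemma parts_erase {S : Finset α} {P : Finset (Finset α)} (hP : P ∈ parts S)
    {J : Finset α} (hJ : J ∈ P) : P.erase J ∈ parts (S \ J) := by
  obtain ⟨h1, h2, h3⟩ := mem_parts.1 hP
  refine mem_parts.2 ⟨fun K hK => h1 K (Finset.mem_of_mem_erase hK),
    h2.subset (by simp only [Finset.coe_subset]; exact Finset.erase_subset _ _), ?_⟩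
  ext x
  simp only [Finset.mem_sup, Finset.mem_sdiff, Finset.mem_erase, id]
  constructor
  · rintro ⟨K, ⟨hKJ, hKP⟩, hxK⟩
    constructor
    · rw [← h3]; exact Finset.mem_sup.2 ⟨K, hKP, hxK⟩
    · intro hxJ
      exact hKJ (block_unique hP hKP hJ hxK hxJ)
  · rintro ⟨hxS, hxJ⟩
    rw [← h3] at hxS
    obtain ⟨K, hKP, hxK⟩ := Finset.mem_sup.1 hxS
    exact ⟨K, ⟨fun h => hxJ (by rw [← h]; exact hxK), hKP⟩, hxK⟩

lemma parts_insert_block {U : Finset α} {Q : Finset (Finset α)} (hQ : Q ∈ parts U)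
    {K : Finset α} (hK : K.Nonempty) (hdisj : Disjoint K U) :
    insert K Q ∈ parts (U ∪ K) ∧ K ∉ Q := by
  obtain ⟨h1, h2, h3⟩ := mem_parts.1 hQ
  have hKQ : K ∉ Q := by
    intro h
    obtain ⟨y, hy⟩ := hK
    have hyU : y ∈ U := by rw [← h3]; exact Finset.mem_sup.2 ⟨K, h, hy⟩
    exact Finset.disjoint_left.1 hdisj hy hyU
  refine ⟨mem_parts.2 ⟨?_, ?_, ?_⟩, hKQ⟩
  · intro J hJ
    rcases Finset.mem_insert.1 hJ with rfl | hJQ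
    · exact hK
    · exact h1 J hJQ
  · rw [Finset.coe_insert]
    refine h2.insert ?_
    intro J hJ _
    exact hdisj.mono_right (Finset.le_sup (f := id) (Finset.mem_coe.1 hJ) |>.trans h3.le)
  · rw [Finset.sup_insert, h3]
    exact sup_comm _ _

lemma sdiff_block {S J : Finset α} (t : α) (htJ : t ∈ J) :
    S \ J = (S.erase t) \ (J.erase t) := by
  ext x
  simp only [Finset.mem_sdiff, Finset.mem_erase]
  constructor
  · rintro ⟨hxS, hxJ⟩
    exact ⟨⟨fun h => hxJ (h ▸ htJ), hxS⟩, fun h => hxJ h.2⟩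
  · rintro ⟨⟨hxt, hxS⟩, h⟩
    refine ⟨hxS, fun hxJ => h ⟨hxt, hxJ⟩⟩

lemma union_reconstruct {S T : Finset α} (t : α) (ht : t ∈ S) (hT : T ⊆ S.erase t) :
    ((S.erase t) \ T) ∪ (insert t T) = S := by
  ext x
  simp only [Finset.mem_union, Finset.mem_sdiff, Finset.mem_erase, Finset.mem_insert]
  constructor
  · rintro (⟨⟨-, hxS⟩, -⟩ | rfl | hxT)
    · exact hxS
    · exact ht
    · exact (Finset.mem_erase.1 (hT hxT)).2
  · intro hxS
    by_cases hxt : x = t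
    · exact Or.inr (Or.inl hxt)
    by_cases hxT : x ∈ T
    · exact Or.inr (Or.inr hxT)
    · exact Or.inl ⟨⟨hxt, hxS⟩, hxT⟩

lemma parts_decomp (S : Finset α) (t : α) (ht : t ∈ S) (f : Finset (Finset α) → ℂ) :
    ∑ P ∈ parts S, f P
      = ∑ T ∈ (S.erase t).powerset, ∑ Q ∈ parts ((S.erase t) \ T),
          f (insert (insert t T) Q) := by
  rw [← Finset.sum_sigma ((S.erase t).powerset) (fun T => parts ((S.erase t) \ T))
    (fun p => f (insert (insert t p.1) p.2))]
  have key : ∀ P ∈ parts S,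
      insert (insert t ((blockOf P t).erase t)) (P.erase (blockOf P t)) = P := by
    intro P hP
    obtain ⟨hmem, htmem, -⟩ := blockOf_spec hP ht
    rw [Finset.insert_erase htmem, Finset.insert_erase hmem]
  apply Finset.sum_nbij'
    (i := fun P => (⟨(blockOf P t).erase t, P.erase (blockOf P t)⟩ :
      (_ : Finset α) × Finset (Finset α)))
    (j := fun p => insert (insert t p.1) p.2)
  · -- maps into sigma
    intro P hP
    obtain ⟨hmem, htmem, -⟩ := blockOf_spec hP ht
    rw [Finset.mem_sigma]
    constructor
    · exact Finset.mem_powerset.2 (Finset.erase_subset_erase t (block_sub hP hmem))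
    · rw [← sdiff_block t htmem]
      exact parts_erase hP hmem
  · -- maps back
    rintro ⟨T, Q⟩ hp
    rw [Finset.mem_sigma] at hp
    obtain ⟨hT, hQ⟩ := hp
    dsimp only at hT hQ ⊢
    rw [Finset.mem_powerset] at hT
    have hdisj : Disjoint (insert t T) ((S.erase t) \ T) := by
      rw [Finset.disjoint_left]
      intro x hx hx'
      rcases Finset.mem_insert.1 hx with rfl | hxT
      · exact (Finset.mem_erase.1 (Finset.mem_sdiff.1 hx').1).1 rfl
      · exact (Finset.mem_sdiff.1 hx').2 hxT
    have h := (parts_insert_block hQ (Finset.insert_nonempty t T) hdisj).1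
    rwa [union_reconstruct t ht hT] at h
  · -- left inverse
    intro P hP
    exact key P hP
  · -- right inverse
    rintro ⟨T, Q⟩ hp
    rw [Finset.mem_sigma] at hp
    obtain ⟨hT, hQ⟩ := hp
    dsimp only at hT hQ ⊢
    rw [Finset.mem_powerset] at hT
    have htT : t ∉ T := fun h => (Finset.mem_erase.1 (hT h)).1 rfl
    have hdisj : Disjoint (insert t T) ((S.erase t) \ T) := by
      rw [Finset.disjoint_left]
      intro x hx hx'
      rcases Finset.mem_insert.1 hx with rfl | hxT
      · exact (Finset.mem_erase.1 (Finset.mem_sdiff.1 hx').1).1 rfl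
      · exact (Finset.mem_sdiff.1 hx').2 hxT
    obtain ⟨hmemP, hKQ⟩ := parts_insert_block hQ (Finset.insert_nonempty t T) hdisj
    rw [union_reconstruct t ht hT] at hmemP
    have hKblock : insert t T = blockOf (insert (insert t T) Q) t :=
      (blockOf_spec hmemP ht).2.2 _ (Finset.mem_insert_self _ _) (Finset.mem_insert_self t T)
    have h1 : (blockOf (insert (insert t T) Q) t).erase t = T := by
      rw [← hKblock, Finset.erase_insert htT]
    have h2 : (insert (insert t T) Q).erase (blockOf (insert (insert t T) Q) t) = Q := by
      rw [← hKblock, Finset.erase_insert hKQ]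
    exact Sigma.ext h1 (heq_of_eq h2)
  · intro P hP
    exact (congrArg f (key P hP)).symm


noncomputable def wfun (b : α → ℂ) (J : Finset α) : ℂ :=
  ∏ r ∈ Finset.range (J.card - 1), ((∑ i ∈ J, b i) - 1 - r)

noncomputable def Phi (b : α → ℂ) (S : Finset α) (x : ℂ) : ℂ :=
  ∑ P ∈ parts S, x ^ P.card * ∏ J ∈ P, wfun b J

lemma block_not_mem {U : Finset α} {Q : Finset (Finset α)} (hQ : Q ∈ parts U)
    {t : α} (ht : t ∉ U) {K : Finset α} (htK : t ∈ K) : K ∉ Q := by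
  intro h
  exact ht (block_sub hQ h htK)

lemma Phi_eq (b : α → ℂ) (x : ℂ) : ∀ S : Finset α, Phi b S x = Bfun b S x := by
  intro S
  induction S using Finset.strongInduction with
  | _ S IH =>
    by_cases hS : S = ∅
    · subst hS
      rw [Phi, parts_empty, Bfun, if_pos rfl]
      simp
    obtain ⟨t, ht⟩ := Finset.nonempty_of_ne_empty hS
    rw [Phi, parts_decomp S t ht (fun P => x ^ P.card * ∏ J ∈ P, wfun b J)]
    have inner : ∀ T ∈ (S.erase t).powerset,
        ∑ Q ∈ parts ((S.erase t) \ T),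
            x ^ (insert (insert t T) Q).card * ∏ J ∈ insert (insert t T) Q, wfun b J
          = x * Afun b T (b t) * Bfun b ((S.erase t) \ T) x := by
      intro T hT
      rw [Finset.mem_powerset] at hT
      have htT : t ∉ T := fun h => (Finset.mem_erase.1 (hT h)).1 rfl
      have hwf : wfun b (insert t T) = Afun b T (b t) := by
        rw [wfun, Afun, Finset.card_insert_of_notMem htT, Nat.add_sub_cancel,
          Finset.sum_insert htT]
      have step : ∀ Q ∈ parts ((S.erase t) \ T),
          x ^ (insert (insert t T) Q).card * ∏ J ∈ insert (insert t T) Q, wfun b J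
            = (x ^ Q.card * ∏ J ∈ Q, wfun b J) * (x * Afun b T (b t)) := by
        intro Q hQ
        have htU : t ∉ (S.erase t) \ T := fun h => (Finset.mem_erase.1 (Finset.mem_sdiff.1 h).1).1 rfl
        have hKQ : insert t T ∉ Q := block_not_mem hQ htU (Finset.mem_insert_self t T)
        rw [Finset.card_insert_of_notMem hKQ, Finset.prod_insert hKQ, hwf, pow_succ]
        ring
      rw [Finset.sum_congr rfl step, ← Finset.sum_mul]
      have : ∑ Q ∈ parts ((S.erase t) \ T), x ^ Q.card * ∏ J ∈ Q, wfun b J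
          = Phi b ((S.erase t) \ T) x := rfl
      have hss : (S.erase t) \ T ⊂ S := by
        refine Finset.ssubset_iff_of_subset ?_ |>.2 ⟨t, ht, fun h =>
          (Finset.mem_erase.1 (Finset.mem_sdiff.1 h).1).1 rfl⟩
        exact (Finset.sdiff_subset).trans (Finset.erase_subset _ _)
      rw [this, IH _ hss]
      ring
    rw [Finset.sum_congr rfl inner]
    have : ∑ T ∈ (S.erase t).powerset, x * Afun b T (b t) * Bfun b ((S.erase t) \ T) x
        = x * Lfun b (S.erase t) x (b t) := by
      rw [Lfun, Finset.mul_sum]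
      apply Finset.sum_congr rfl
      intro T _
      ring
    rw [this, Rb b x (S.erase t) (b t), Rfun, Bfun, if_neg hS,
      Finset.card_erase_of_mem ht]
    congr 1
    apply Finset.prod_congr rfl
    intro r _
    have hsum : ∑ i ∈ S.erase t, b i = (∑ i ∈ S, b i) - b t := by
      rw [← Finset.add_sum_erase S b ht]; ring
    rw [hsum]
    ring


/-- concatenation of factorial-type products -/
lemma prod_concat (y : ℂ) (p q : ℕ) :
    ∏ j ∈ Finset.range (p + q), (y - p + j)
      = (∏ r ∈ Finset.range p, (y - 1 - r)) * ∏ r ∈ Finset.range q, (y + r) := by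
  induction p with
  | zero =>
    simp only [Nat.zero_add, Finset.range_zero, Finset.prod_empty, one_mul, Nat.cast_zero,
      sub_zero]
  | succ p IH =>
    have e0 : p + 1 + q = (p + q) + 1 := by omega
    rw [e0, Finset.prod_range_succ']
    have e1 : ∀ j ∈ Finset.range (p + q), (y - ((p+1:ℕ):ℂ) + ((j+1:ℕ):ℂ)) = y - p + j := by
      intro j _; push_cast; ring
    rw [Finset.prod_congr rfl e1, IH, Finset.prod_range_succ]
    push_cast
    ring


lemma star2 (b : α → ℂ) (S : Finset α) (e₁ e₂ : α) (h1 : e₁ ∈ S) (h2 : e₂ ∈ S) (hne : e₁ ≠ e₂) :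
    ∑ P ∈ (parts S).filter (fun P => ∃ J ∈ P, e₁ ∈ J ∧ e₂ ∈ J),
        (1 - ∑ i ∈ S, b i) ^ (P.card - 1) * ∏ J ∈ P, wfun b J
      = (((S.card - 2).factorial : ℕ) : ℂ) * ((∑ i ∈ S, b i) - 1) *
          ∏ i ∈ (S.erase e₁).erase e₂, (b i - 1) := by
  classical
  set B : ℂ := ∑ i ∈ S, b i with hB
  set S₀ : Finset α := (S.erase e₁).erase e₂ with hS₀
  set g : Finset (Finset α) → ℂ := fun P => (1 - B) ^ (P.card - 1) * ∏ J ∈ P, wfun b J with hg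
  have h2' : e₂ ∈ S.erase e₁ := Finset.mem_erase.2 ⟨fun h => hne h.symm, h2⟩
  have hk₀ : S₀.card = S.card - 2 := by
    rw [hS₀, Finset.card_erase_of_mem h2', Finset.card_erase_of_mem h1]
    omega
  -- Step 1 : decompose the filtered sum
  have step1 : ∑ P ∈ (parts S).filter (fun P => ∃ J ∈ P, e₁ ∈ J ∧ e₂ ∈ J), g P
      = ∑ T ∈ S₀.powerset, ∑ Q ∈ parts (S₀ \ T),
          g (insert (insert e₁ (insert e₂ T)) Q) := by
    rw [Finset.sum_filter,
      parts_decomp S e₁ h1 (fun P => if ∃ J ∈ P, e₁ ∈ J ∧ e₂ ∈ J then g P else 0)]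
    have inner : ∀ T ∈ (S.erase e₁).powerset,
        (∑ Q ∈ parts ((S.erase e₁) \ T),
          if ∃ J ∈ insert (insert e₁ T) Q, e₁ ∈ J ∧ e₂ ∈ J
            then g (insert (insert e₁ T) Q) else 0)
        = if e₂ ∈ T then ∑ Q ∈ parts ((S.erase e₁) \ T), g (insert (insert e₁ T) Q)
            else 0 := by
      intro T hT
      rw [Finset.mem_powerset] at hT
      by_cases he₂ : e₂ ∈ T
      · rw [if_pos he₂]
        apply Finset.sum_congr rfl
        intro Q hQ
        rw [if_pos ⟨insert e₁ T, Finset.mem_insert_self _ _,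
          Finset.mem_insert_self _ _, Finset.mem_insert_of_mem he₂⟩]
      · rw [if_neg he₂]
        apply Finset.sum_eq_zero
        intro Q hQ
        rw [if_neg]
        rintro ⟨J, hJ, hJ1, hJ2⟩
        rcases Finset.mem_insert.1 hJ with rfl | hJQ
        · rcases Finset.mem_insert.1 hJ2 with h | h
          · exact hne h.symm
          · exact he₂ h
        · have : J ⊆ (S.erase e₁) \ T := block_sub hQ hJQ
          exact (Finset.mem_erase.1 (Finset.mem_sdiff.1 (this hJ1)).1).1 rfl
    rw [Finset.sum_congr rfl inner, ← Finset.sum_filter,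
      sum_powerset_filter_mem (S.erase e₁) e₂ h2'
        (fun T => ∑ Q ∈ parts ((S.erase e₁) \ T), g (insert (insert e₁ T) Q))]
    apply Finset.sum_congr rfl
    intro T hT
    have hset : (S.erase e₁) \ (insert e₂ T) = S₀ \ T := by
      ext x
      simp only [Finset.mem_sdiff, Finset.mem_erase, Finset.mem_insert, hS₀]
      tauto
    rw [hset]
  rw [step1]
  -- Step 2 : inner sums via Phi
  have step2 : ∀ T ∈ S₀.powerset,
      ∑ Q ∈ parts (S₀ \ T), g (insert (insert e₁ (insert e₂ T)) Q)
        = wfun b (insert e₁ (insert e₂ T)) * Bfun b (S₀ \ T) (1 - B) := by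
    intro T hT
    rw [Finset.mem_powerset] at hT
    have he₁U : e₁ ∉ S₀ \ T := by
      intro h
      exact (Finset.mem_erase.1 (Finset.mem_erase.1 (Finset.mem_sdiff.1 h).1).2).1 rfl
    have step : ∀ Q ∈ parts (S₀ \ T),
        g (insert (insert e₁ (insert e₂ T)) Q)
          = ((1 - B) ^ Q.card * ∏ J ∈ Q, wfun b J) * wfun b (insert e₁ (insert e₂ T)) := by
      intro Q hQ
      have hKQ : insert e₁ (insert e₂ T) ∉ Q :=
        block_not_mem hQ he₁U (Finset.mem_insert_self _ _)
      rw [hg]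
      dsimp only
      rw [Finset.card_insert_of_notMem hKQ, Nat.add_sub_cancel, Finset.prod_insert hKQ]
      ring
    rw [Finset.sum_congr rfl step, ← Finset.sum_mul]
    have : ∑ Q ∈ parts (S₀ \ T), (1 - B) ^ Q.card * ∏ J ∈ Q, wfun b J
        = Phi b (S₀ \ T) (1 - B) := rfl
    rw [this, Phi_eq]
    ring
  rw [Finset.sum_congr rfl step2]
  set d : ℂ := b e₁ + b e₂ with hd
  have hBsum : B = d + ∑ i ∈ S₀, b i := by
    rw [hB, hd, hS₀, ← Finset.add_sum_erase S b h1, ← Finset.add_sum_erase _ b h2']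
    ring
  -- Step 3 : per-subset algebraic evaluation
  have step3 : ∀ T ∈ S₀.powerset,
      wfun b (insert e₁ (insert e₂ T)) * Bfun b (S₀ \ T) (1 - B)
        = (B - 1) * ((-1:ℂ)^(S₀.card - T.card) *
            ∏ j ∈ Finset.range S₀.card,
              ((∑ i ∈ T, (b i - 1)) + (d - 1 + (j:ℂ)))) := by
    intro T hT
    rw [Finset.mem_powerset] at hT
    have he₂T : e₂ ∉ T := fun h => (Finset.mem_erase.1 (hT h)).1 rfl
    have he₁T : e₁ ∉ insert e₂ T := by
      intro h
      rcases Finset.mem_insert.1 h with h | h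
      · exact hne h
      · exact (Finset.mem_erase.1 (Finset.mem_erase.1 (hT h)).2).1 rfl
    have hcardK : (insert e₁ (insert e₂ T)).card = T.card + 2 := by
      rw [Finset.card_insert_of_notMem he₁T, Finset.card_insert_of_notMem he₂T]
    have hsumK : ∑ i ∈ insert e₁ (insert e₂ T), b i = d + ∑ i ∈ T, b i := by
      rw [Finset.sum_insert he₁T, Finset.sum_insert he₂T, hd]
      ring
    set y : ℂ := d + ∑ i ∈ T, b i with hy
    have hwK : wfun b (insert e₁ (insert e₂ T))
        = ∏ r ∈ Finset.range (T.card + 1), (y - 1 - r) := by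
      rw [wfun, hcardK, hsumK]
      apply Finset.prod_congr rfl
      intro r _
      ring
    have hv : ∑ i ∈ T, (b i - 1) = (∑ i ∈ T, b i) - T.card := by
      rw [Finset.sum_sub_distrib, Finset.sum_const]
      push_cast
      ring
    have hcardsd : T.card + (S₀ \ T).card = S₀.card := by
      have := Finset.card_sdiff_of_subset hT
      have := Finset.card_le_card hT
      omega
    by_cases hU : S₀ \ T = ∅
    · -- T = S₀
      have hTS : T = S₀ := Finset.Subset.antisymm hT (Finset.sdiff_eq_empty_iff_subset.1 hU)
      have hTcard : T.card = S₀.card := by rw [hTS]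
      have hTsum : ∑ i ∈ T, b i = ∑ i ∈ S₀, b i := by rw [hTS]
      rw [hU, Bfun, if_pos rfl, mul_one, hwK]
      have hconcat := prod_concat y (T.card + 1) 0
      rw [Finset.range_zero, Finset.prod_empty, mul_one, Nat.add_zero] at hconcat
      rw [← hconcat, Finset.prod_range_succ]
      have hsign : S₀.card - T.card = 0 := by omega
      rw [hsign, pow_zero, one_mul]
      have hfin : y - ((T.card + 1 : ℕ):ℂ) + (T.card:ℂ) = B - 1 := by
        rw [hy, hBsum, hTsum]
        push_cast
        ring
      rw [hfin]
      have hfac : ∀ j ∈ Finset.range T.card,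
          y - ((T.card + 1 : ℕ):ℂ) + (j:ℂ) = (∑ i ∈ T, (b i - 1)) + (d - 1 + (j:ℂ)) := by
        intro j _
        rw [hv, hy]
        push_cast
        ring
      rw [Finset.prod_congr rfl hfac, hTcard]
      ring
    · -- S₀ \ T nonempty
      have hupos : 1 ≤ (S₀ \ T).card := Finset.card_pos.2 (Finset.nonempty_of_ne_empty hU)
      have husum : (∑ i ∈ S₀ \ T, b i) + ∑ i ∈ T, b i = ∑ i ∈ S₀, b i :=
        Finset.sum_sdiff hT
      have hBf : Bfun b (S₀ \ T) (1 - B)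
          = (1 - B) * ((-1:ℂ)^((S₀ \ T).card - 1) *
              ∏ r ∈ Finset.range ((S₀ \ T).card - 1), (y + r)) := by
        rw [Bfun, if_neg hU]
        congr 1
        have hneg : ∀ r ∈ Finset.range ((S₀ \ T).card - 1),
            (1 - B) + (∑ i ∈ S₀ \ T, b i) - 1 - (r:ℂ) = -(y + r) := by
          intro r _
          rw [hy, hBsum]
          linear_combination husum
        rw [Finset.prod_congr rfl hneg, prod_neg_shift (fun r => y + r)]
      have hconcat := prod_concat y (T.card + 1) ((S₀ \ T).card - 1)
      have hrange : T.card + 1 + ((S₀ \ T).card - 1) = S₀.card := by omega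
      rw [hrange] at hconcat
      have hfac : ∀ j ∈ Finset.range S₀.card,
          y - ((T.card + 1 : ℕ):ℂ) + (j:ℂ) = (∑ i ∈ T, (b i - 1)) + (d - 1 + (j:ℂ)) := by
        intro j _
        rw [hv, hy]
        push_cast
        ring
      rw [Finset.prod_congr rfl hfac] at hconcat
      have hsign : S₀.card - T.card = ((S₀ \ T).card - 1) + 1 := by omega
      rw [hwK, hBf, hsign, pow_succ, hconcat]
      ring
  rw [Finset.sum_congr rfl step3, ← Finset.mul_sum]
  -- Step 4 : expand and use the alternating-sum lemmas
  have expand : ∀ T ∈ S₀.powerset,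
      (-1:ℂ)^(S₀.card - T.card) * ∏ j ∈ Finset.range S₀.card,
          ((∑ i ∈ T, (b i - 1)) + (d - 1 + (j:ℂ)))
        = ∑ W ∈ (Finset.range S₀.card).powerset,
            ((-1:ℂ)^(S₀.card - T.card) * (∑ i ∈ T, (b i - 1)) ^ W.card) *
              ∏ j ∈ (Finset.range S₀.card) \ W, (d - 1 + (j:ℂ)) := by
    intro T _
    rw [Finset.prod_add, Finset.mul_sum]
    apply Finset.sum_congr rfl
    intro W _
    rw [Finset.prod_const]
    ring
  rw [Finset.sum_congr rfl expand, Finset.sum_comm]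
  have hsplit := Finset.add_sum_erase ((Finset.range S₀.card).powerset)
    (fun W => ∑ T ∈ S₀.powerset,
      ((-1:ℂ)^(S₀.card - T.card) * (∑ i ∈ T, (b i - 1)) ^ W.card) *
        ∏ j ∈ (Finset.range S₀.card) \ W, (d - 1 + (j:ℂ)))
    (Finset.mem_powerset_self _)
  rw [← hsplit]
  have hzero : ∀ W ∈ ((Finset.range S₀.card).powerset).erase (Finset.range S₀.card),
      ∑ T ∈ S₀.powerset,
        ((-1:ℂ)^(S₀.card - T.card) * (∑ i ∈ T, (b i - 1)) ^ W.card) *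
          ∏ j ∈ (Finset.range S₀.card) \ W, (d - 1 + (j:ℂ)) = 0 := by
    intro W hW
    obtain ⟨hWne, hWp⟩ := Finset.mem_erase.1 hW
    have hWss : W ⊂ Finset.range S₀.card :=
      Finset.ssubset_iff_subset_ne.2 ⟨Finset.mem_powerset.1 hWp, hWne⟩
    have hWcard : W.card < S₀.card := by
      have := Finset.card_lt_card hWss
      rwa [Finset.card_range] at this
    rw [← Finset.sum_mul, alt_sum_pow_zero' (fun i => b i - 1) S₀ W.card hWcard, zero_mul]
  rw [Finset.sum_congr rfl hzero, Finset.sum_const, smul_zero, add_zero]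
  simp only [Finset.sdiff_self, Finset.prod_empty, Finset.card_range, mul_one]
  rw [alt_sum_pow_card (fun i => b i - 1) S₀, hk₀]
  ring


lemma partitionsInto_eq (n s : ℕ) :
    partitionsInto n s = (parts (univ : Finset (Fin n))).filter (fun P => P.card = s) := by
  ext P
  have hP : P ∈ (univ : Finset (Fin n)).powerset.powerset :=
    Finset.mem_powerset.2 (fun J _ => Finset.mem_powerset.2 (Finset.subset_univ J))
  simp only [partitionsInto, parts, Finset.mem_filter, Finset.mem_univ, true_and, hP]
  tauto

lemma parts_card_pos {n : ℕ} (hn : 2 ≤ n) {P : Finset (Finset (Fin n))}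
    (hP : P ∈ parts (univ : Finset (Fin n))) : 0 < P.card := by
  rw [Finset.card_pos]
  rcases Finset.eq_empty_or_nonempty P with rfl | h
  · obtain ⟨-, -, h3⟩ := mem_parts.1 hP
    have : (⟨0, by omega⟩ : Fin n) ∈ (∅ : Finset (Finset (Fin n))).sup id := by
      rw [h3]; exact Finset.mem_univ _
    simp at this
  · exact h

lemma parts_card_sum {n : ℕ} {P : Finset (Finset (Fin n))}
    (hP : P ∈ parts (univ : Finset (Fin n))) : ∑ J ∈ P, J.card = n := by
  obtain ⟨-, h2, h3⟩ := mem_parts.1 hP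
  have hd : ∀ x ∈ P, ∀ y ∈ P, x ≠ y → Disjoint (id x) (id y) := by
    intro x hx y hy hxy
    exact h2 (Finset.mem_coe.2 hx) (Finset.mem_coe.2 hy) hxy
  have : P.sup id = P.biUnion id := Finset.sup_eq_biUnion P id
  have hcard : (P.biUnion id).card = ∑ J ∈ P, (id J).card := Finset.card_biUnion hd
  rw [← this, h3] at hcard
  rw [Finset.card_univ, Fintype.card_fin] at hcard
  exact hcard.symm

lemma sp_card_le {n : ℕ} (hn : 2 ≤ n) {P : Finset (Finset (Fin n))}
    (hP : P ∈ parts (univ : Finset (Fin n))) {e₁ e₂ : Fin n} (hne : e₁ ≠ e₂)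
    (hsp : ∃ J ∈ P, e₁ ∈ J ∧ e₂ ∈ J) : P.card ≤ n - 1 := by
  obtain ⟨J₀, hJ₀, hJe₁, hJe₂⟩ := hsp
  have hsum : ∑ J ∈ P, J.card = n := parts_card_sum hP
  have h2card : 2 ≤ J₀.card := Finset.one_lt_card.2 ⟨e₁, hJe₁, e₂, hJe₂, hne⟩
  obtain ⟨h1, -, -⟩ := mem_parts.1 hP
  have hbound : P.card - 1 ≤ ∑ J ∈ P.erase J₀, J.card := by
    have : ∀ J ∈ P.erase J₀, 1 ≤ J.card := fun J hJ =>
      Finset.card_pos.2 (h1 J (Finset.mem_of_mem_erase hJ))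
    calc P.card - 1 = (P.erase J₀).card := (Finset.card_erase_of_mem hJ₀).symm
      _ = ∑ J ∈ P.erase J₀, 1 := by rw [Finset.card_eq_sum_ones]
      _ ≤ ∑ J ∈ P.erase J₀, J.card := Finset.sum_le_sum this
  have hsplit : ∑ J ∈ P, J.card = J₀.card + ∑ J ∈ P.erase J₀, J.card :=
    (Finset.add_sum_erase P _ hJ₀).symm
  have hpos : 0 < P.card := parts_card_pos hn hP
  omega

lemma card_one_univ {n : ℕ} {P : Finset (Finset (Fin n))}
    (hP : P ∈ parts (univ : Finset (Fin n))) (hc : P.card = 1) :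
    P = {(univ : Finset (Fin n))} := by
  obtain ⟨J, rfl⟩ := Finset.card_eq_one.1 hc
  obtain ⟨-, -, h3⟩ := mem_parts.1 hP
  rw [Finset.sup_singleton] at h3
  rw [show id J = J from rfl] at h3
  rw [h3]

lemma singleton_univ_mem {n : ℕ} (hn : 2 ≤ n) {e₁ e₂ : Fin n} :
    ({(univ : Finset (Fin n))} : Finset (Finset (Fin n))) ∈
      (parts (univ : Finset (Fin n))).filter (fun P => ∃ J ∈ P, e₁ ∈ J ∧ e₂ ∈ J) := by
  rw [Finset.mem_filter]
  refine ⟨mem_parts.2 ⟨?_, ?_, ?_⟩, univ, Finset.mem_singleton_self _, Finset.mem_univ _,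
    Finset.mem_univ _⟩
  · intro J hJ
    rw [Finset.mem_singleton] at hJ
    subst hJ
    exact ⟨⟨0, by omega⟩, Finset.mem_univ _⟩
  · rw [Finset.coe_singleton]
    exact Set.pairwiseDisjoint_singleton _ _
  · exact Finset.sup_singleton

lemma main_key (n : ℕ) (hn : 2 ≤ n) (h₁ : n - 2 < n) (h₂ : n - 1 < n) (b : Fin n → ℂ) :
    ((∑ i, b i) - 1) * ((∏ j ∈ Finset.range (n - 2), ((∑ i, b i) - 2 - (j : ℂ))) +
      ∑ s ∈ Finset.Icc 2 (n - 1),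
        (-1 : ℂ) ^ (s - 1) * ((∑ i, b i) - 1) ^ (s - 2) *
          ∑ P ∈ (partitionsInto n s).filter
              (fun P => ∃ J ∈ P, (⟨n - 2, h₁⟩ : Fin n) ∈ J ∧
                (⟨n - 1, h₂⟩ : Fin n) ∈ J),
            ∏ J ∈ P,
              ∏ j ∈ Finset.range (J.card - 1),
                ((∑ i ∈ J, b i) - 1 - (j : ℂ)))
    = ((∑ i, b i) - 1) * (((n - 2).factorial : ℂ) *
        ∏ i ∈ Finset.univ.filter (fun i : Fin n => (i : ℕ) < n - 2), (b i - 1)) := by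
  have he₁ : n - 2 < n := by omega
  have he₂ : n - 1 < n := by omega
  set e₁ : Fin n := ⟨n - 2, he₁⟩ with he₁d
  set e₂ : Fin n := ⟨n - 1, he₂⟩ with he₂d
  have hne : e₁ ≠ e₂ := by
    simp only [he₁d, he₂d, Ne, Fin.mk.injEq]
    omega
  set B : ℂ := ∑ i, b i with hB
  set sp : Finset (Finset (Finset (Fin n))) :=
    (parts (univ : Finset (Fin n))).filter (fun P => ∃ J ∈ P, e₁ ∈ J ∧ e₂ ∈ J) with hsp
  set g : Finset (Finset (Fin n)) → ℂ :=
    fun P => (1 - B)^(P.card - 1) * ∏ J ∈ P, wfun b J with hg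
  -- each s-term
  have hterm : ∀ s ∈ Finset.Icc 2 (n-1),
      (B - 1) * ((-1 : ℂ) ^ (s - 1) * (B - 1) ^ (s - 2) *
          ∑ P ∈ (partitionsInto n s).filter
              (fun P => ∃ J ∈ P, e₁ ∈ J ∧ e₂ ∈ J),
            ∏ J ∈ P, ∏ j ∈ Finset.range (J.card - 1), ((∑ i ∈ J, b i) - 1 - (j : ℂ)))
        = ∑ P ∈ sp.filter (fun P => P.card = s), g P := by
    intro s hs
    obtain ⟨hs2, hsn⟩ := Finset.mem_Icc.1 hs
    have hDs : (partitionsInto n s).filter (fun P => ∃ J ∈ P, e₁ ∈ J ∧ e₂ ∈ J)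
        = sp.filter (fun P => P.card = s) := by
      rw [partitionsInto_eq, hsp]
      ext P
      simp only [Finset.mem_filter]
      tauto
    rw [hDs, ← mul_assoc, Finset.mul_sum]
    apply Finset.sum_congr rfl
    intro P hP
    have hcard : P.card = s := (Finset.mem_filter.1 hP).2
    have hpow : (B - 1) * ((-1 : ℂ) ^ (s - 1) * (B - 1) ^ (s - 2)) = (1 - B)^(s - 1) := by
      have h1 : s - 1 = (s - 2) + 1 := by omega
      have h2 : (1 - B : ℂ) = (-1) * (B - 1) := by ring
      rw [h2, mul_pow, h1, pow_succ, pow_succ]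
      ring
    rw [hg]
    dsimp only
    rw [hcard, ← hpow]
    simp only [wfun]
  -- collapse the double sum
  have hsum2 : ∑ s ∈ Finset.Icc 2 (n-1), ∑ P ∈ sp.filter (fun P => P.card = s), g P
      = ∑ P ∈ sp.filter (fun P => P.card ≠ 1), g P := by
    have hfib : ∀ s ∈ Finset.Icc 2 (n-1),
        sp.filter (fun P => P.card = s)
          = (sp.filter (fun P => P.card ≠ 1)).filter (fun P => P.card = s) := by
      intro s hs
      obtain ⟨hs2, -⟩ := Finset.mem_Icc.1 hs
      ext P
      simp only [Finset.mem_filter]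
      constructor
      · rintro ⟨h1, h2⟩
        exact ⟨⟨h1, by omega⟩, h2⟩
      · rintro ⟨⟨h1, -⟩, h2⟩
        exact ⟨h1, h2⟩
    have hfib' : ∀ s ∈ Finset.Icc 2 (n-1),
        ∑ P ∈ sp.filter (fun P => P.card = s), g P
          = ∑ P ∈ (sp.filter (fun P => P.card ≠ 1)).filter (fun P => P.card = s), g P := by
      intro s hs
      rw [hfib s hs]
    rw [Finset.sum_congr rfl hfib']
    apply Finset.sum_fiberwise_of_maps_to
    intro P hP
    rw [Finset.mem_filter] at hP
    obtain ⟨hPsp, hPc⟩ := hP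
    rw [hsp, Finset.mem_filter] at hPsp
    obtain ⟨hPparts, hPspec⟩ := hPsp
    have h1 := parts_card_pos hn hPparts
    have h2 := sp_card_le hn hPparts hne hPspec
    rw [Finset.mem_Icc]
    omega
  -- first term
  have hfirst : (B - 1) * ∏ j ∈ Finset.range (n - 2), (B - 2 - (j : ℂ))
      = g {(univ : Finset (Fin n))} := by
    rw [hg]
    dsimp only
    rw [Finset.card_singleton, Nat.sub_self, pow_zero, one_mul, Finset.prod_singleton, wfun,
      Finset.card_univ, Fintype.card_fin, ← hB]
    rw [show n - 1 = (n - 2) + 1 by omega, Finset.prod_range_succ']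
    have : ∀ r ∈ Finset.range (n - 2), (B - 1 - ((r + 1 : ℕ) : ℂ)) = B - 2 - (r:ℂ) := by
      intro r _; push_cast; ring
    rw [Finset.prod_congr rfl this]
    push_cast
    ring
  have hfilter1 : sp.filter (fun P => P.card = 1) = {{(univ : Finset (Fin n))}} := by
    ext P
    simp only [Finset.mem_filter, Finset.mem_singleton]
    constructor
    · rintro ⟨hPsp, hc⟩
      rw [hsp, Finset.mem_filter] at hPsp
      exact card_one_univ hPsp.1 hc
    · rintro rfl
      exact ⟨singleton_univ_mem hn, Finset.card_singleton _⟩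
  have hsplitall : ∑ P ∈ sp, g P
      = g {(univ : Finset (Fin n))} + ∑ P ∈ sp.filter (fun P => P.card ≠ 1), g P := by
    rw [← Finset.sum_filter_add_sum_filter_not sp (fun P => P.card = 1) g, hfilter1,
      Finset.sum_singleton]
  -- final set identity
  have hset : (((univ : Finset (Fin n)).erase e₁).erase e₂)
      = Finset.univ.filter (fun i : Fin n => (i : ℕ) < n - 2) := by
    ext i
    simp only [Finset.mem_erase, Finset.mem_filter, Finset.mem_univ, and_true, true_and,
      he₁d, he₂d, Ne, Fin.ext_iff]
    have := i.isLt
    omega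
  have hstar := star2 b (univ : Finset (Fin n)) e₁ e₂ (Finset.mem_univ _) (Finset.mem_univ _) hne
  rw [Finset.card_univ, Fintype.card_fin, hset] at hstar
  have hstar2 : ∑ P ∈ sp, g P
      = (B - 1) * (((n - 2).factorial : ℂ) *
          ∏ i ∈ Finset.univ.filter (fun i : Fin n => (i : ℕ) < n - 2), (b i - 1)) := by
    rw [hsp]
    simp only [hg]
    rw [show B = ∑ i, b i from hB] at *
    rw [hstar]
    ring
  rw [mul_add, Finset.mul_sum, hfirst, Finset.sum_congr rfl hterm, hsum2, ← hsplitall, hstar2]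

end AuxiliaryLemmas

lemma main_aux (n : ℕ) (hn : 2 ≤ n) (h₁ : n - 2 < n) (h₂ : n - 1 < n) (b : Fin n → ℂ) (hB : (∑ i, b i) ≠ 1) :
    (∏ j ∈ Finset.range (n - 2), ((∑ i, b i) - 2 - (j : ℂ))) +
      ∑ s ∈ Finset.Icc 2 (n - 1),
        (-1 : ℂ) ^ (s - 1) * ((∑ i, b i) - 1) ^ (s - 2) *
          ∑ P ∈ (partitionsInto n s).filter
              (fun P => ∃ J ∈ P, (⟨n - 2, h₁⟩ : Fin n) ∈ J ∧
                (⟨n - 1, h₂⟩ : Fin n) ∈ J),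
            ∏ J ∈ P,
              ∏ j ∈ Finset.range (J.card - 1),
                ((∑ i ∈ J, b i) - 1 - (j : ℂ)) =
      ((n - 2).factorial : ℂ) *
        ∏ i ∈ Finset.univ.filter (fun i : Fin n => (i : ℕ) < n - 2),
          (b i - 1) :=
  mul_left_cancel₀ (sub_ne_zero.2 hB) (main_key n hn h₁ h₂ b)

/-- The combinatorial identity from Proposition 5.3: for all complex
`b₁, …, bₙ` with `B = ∑ bᵢ`,
`∏_{j=0}^{n-3}(B - 2 - j) + ∑_{s=2}^{n-1} (-1)^{s-1}(B-1)^{s-2}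
∑_{{J₁,…,J_s}} ∏_j f(b_{J_j} - 1, |J_j| + 1) = (n-2)! ∏_{i=1}^{n-2}(b_i - 1)`,
the inner sum over all partitions of `{1, …, n}` into `s` nonempty blocks in
which the elements `n - 1` and `n` lie in the same block. -/
theorem partition_identity_two_nonzero (n : ℕ) (hn : 2 ≤ n) (b : Fin n → ℂ) :
    (∏ j ∈ Finset.range (n - 2), ((∑ i, b i) - 2 - (j : ℂ))) +
      ∑ s ∈ Finset.Icc 2 (n - 1),
        (-1 : ℂ) ^ (s - 1) * ((∑ i, b i) - 1) ^ (s - 2) *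
          ∑ P ∈ (partitionsInto n s).filter
              (fun P => ∃ J ∈ P, (⟨n - 2, by omega⟩ : Fin n) ∈ J ∧
                (⟨n - 1, by omega⟩ : Fin n) ∈ J),
            ∏ J ∈ P,
              ∏ j ∈ Finset.range (J.card - 1),
                ((∑ i ∈ J, b i) - 1 - (j : ℂ)) =
      ((n - 2).factorial : ℂ) *
        ∏ i ∈ Finset.univ.filter (fun i : Fin n => (i : ℕ) < n - 2),
          (b i - 1) := by
  by_cases hB : (∑ i, b i) ≠ 1
  · exact main_aux n hn (by omega) (by omega) b hB
  push_neg at hB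
  have h0 : (0:ℕ) < n := by omega
  set i₀ : Fin n := ⟨0, h0⟩ with hi₀
  set F : ℂ → ℂ := fun ε =>
    ((∏ j ∈ Finset.range (n - 2), ((∑ i, (b i + if i = i₀ then ε else 0)) - 2 - (j : ℂ))) +
      ∑ s ∈ Finset.Icc 2 (n - 1),
        (-1 : ℂ) ^ (s - 1) * ((∑ i, (b i + if i = i₀ then ε else 0)) - 1) ^ (s - 2) *
          ∑ P ∈ (partitionsInto n s).filter
              (fun P => ∃ J ∈ P, (⟨n - 2, by omega⟩ : Fin n) ∈ J ∧
                (⟨n - 1, by omega⟩ : Fin n) ∈ J),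
            ∏ J ∈ P,
              ∏ j ∈ Finset.range (J.card - 1),
                ((∑ i ∈ J, (b i + if i = i₀ then ε else 0)) - 1 - (j : ℂ)))
    - ((n - 2).factorial : ℂ) *
        ∏ i ∈ Finset.univ.filter (fun i : Fin n => (i : ℕ) < n - 2),
          ((b i + if i = i₀ then ε else 0) - 1) with hF
  have hb' : ∀ i : Fin n, Continuous (fun ε : ℂ => b i + if i = i₀ then ε else 0) := by
    intro i
    by_cases h : i = i₀
    · simp only [h, if_true]
      exact continuous_const.add continuous_id
    · simp only [h, if_false]
      exact continuous_const
  have hcont : Continuous F := by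
    rw [hF]
    apply Continuous.sub
    · apply Continuous.add
      · apply continuous_finset_prod
        intro j _
        exact ((continuous_finset_sum _ (fun i _ => hb' i)).sub continuous_const).sub
          continuous_const
      · apply continuous_finset_sum
        intro s _
        apply Continuous.mul
        · apply Continuous.mul
          · exact continuous_const
          · exact ((continuous_finset_sum _ (fun i _ => hb' i)).sub continuous_const).pow _
        · apply continuous_finset_sum
          intro P _
          apply continuous_finset_prod
          intro J _
          apply continuous_finset_prod
          intro j _
          exact ((continuous_finset_sum _ (fun i _ => hb' i)).sub continuous_const).sub
            continuous_const
    · exact continuous_const.mul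
        (continuous_finset_prod _ (fun i _ => (hb' i).sub continuous_const))
  have hzero : ∀ ε : ℂ, ε ≠ 0 → F ε = 0 := by
    intro ε hε
    have hsum : (∑ i, (b i + if i = i₀ then ε else 0)) = 1 + ε := by
      rw [Finset.sum_add_distrib, hB]
      congr 1
      rw [Finset.sum_ite_eq' Finset.univ i₀ (fun _ => ε), if_pos (Finset.mem_univ _)]
    have hne1 : (∑ i, (b i + if i = i₀ then ε else 0)) ≠ 1 := by
      rw [hsum]
      intro h
      exact hε (by linear_combination h)
    have haux := main_aux n hn (by omega) (by omega) (fun i => b i + if i = i₀ then ε else 0) hne1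
    rw [hF]
    dsimp only
    rw [haux, sub_self]
  have hFzero : F = fun _ => 0 := by
    apply hcont.ext_on (dense_compl_singleton (0:ℂ)) continuous_const
    intro ε hε
    exact hzero ε hε
  have hF0 : F 0 = 0 := congrFun hFzero 0
  rw [hF] at hF0
  dsimp only at hF0
  simp only [ite_self, add_zero] at hF0
  linear_combination hF0
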